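/- Assume (r1,r2,r3,r4,i,j,N) is admissible and r1 + r3 = r2 + r4. Then the shifted tuple (r1, r2+N−2, r3, r4+N−2, i+N−2, j+N−2, 2) is admissible, and F_1^N(r1, r2, i; r3, r4, j) = (−1)^N · [N−1]! · [N−2]! · Θ_1(N) · F_1^2(r1, r2+N−2, i+N−2; r3, r4+N−2, j+N−2), where Θ_1(N) = ∏_{m=1}^{N−2} ( [(i−r1+r2)/2 + m] · [(j+r2−r3)/2 + m] · [(j−r1+r4)/2 + m] · [(i−r3+r4)/2 + m] )^{−1/2}. (For N = 2 the empty product is 1 and the identity is trivial.) This expresses any type I multiplicity-free U_q(sl_N) 6-j symbol through a U_q(sl_2) 6-j symbol. -/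

import Mathlib

/-!
Write `n = N − 2`. Shifting `r₂, r₄, i, j` by `n` leaves every factorial of the type I sum
unchanged except the last one, `[(i+j−r₁−r₃)/2 + n + m]!`, which is exactly the shifted
type I factorial for `N = 2`; the summation range is unchanged too (its lower end because
`r₁ + r₃ = r₂ + r₄`), and `ρ` moves by `n`, which only costs the sign `(−1)ⁿ`. For the
prefactors, `[x + n]! = [x]! · [x+1]⋯[x+n]` gives `θ₂(a, b+n, c+n) = θ_N(a,b,c) · √([x+1]⋯[x+n])`
with `x = (b+c−a)/2`, and the four square roots so produced are the factors of `Θ₁(N)⁻¹`.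
-/

open Finset

/-- The quantum integer `[n] = (tⁿ − t⁻ⁿ)/(t − t⁻¹)`. -/
noncomputable def qint (t : ℝ) (n : ℤ) : ℝ := (t ^ n - t ^ (-n)) / (t - t⁻¹)

/-- The quantum factorial `[n]! = [1][2]⋯[n]`, with `[0]! = 1`
(and value `1` for negative arguments, which never occur below). -/
noncomputable def qfact (t : ℝ) (n : ℤ) : ℝ :=
  ∏ k ∈ Finset.range n.toNat, qint t ((k : ℤ) + 1)

/-- The q-Pochhammer symbol `(x; q)_n = ∏_{s=0}^{n−1} (1 − x qˢ)`. -/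
noncomputable def qpoch (x q : ℝ) (n : ℕ) : ℝ :=
  ∏ s ∈ Finset.range n, (1 - x * q ^ s)

/-- Admissibility of the tuple `(r₁,r₂,r₃,r₄,i,j,N)`. -/
def Admissible (r₁ r₂ r₃ r₄ i j N : ℤ) : Prop :=
  0 ≤ r₁ ∧ 0 ≤ r₂ ∧ 0 ≤ r₃ ∧ 0 ≤ r₄ ∧ 0 ≤ i ∧ 0 ≤ j ∧ 2 ≤ N ∧
  2 ∣ (r₁ + r₂ + i) ∧ 2 ∣ (r₃ + r₄ + i) ∧ 2 ∣ (r₁ + r₄ + j) ∧ 2 ∣ (r₂ + r₃ + j) ∧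
  max |r₁ - r₂| |r₃ - r₄| ≤ i ∧ i ≤ min (r₁ + r₂) (r₃ + r₄) ∧
  max |r₂ - r₃| |r₁ - r₄| ≤ j ∧ j ≤ min (r₂ + r₃) (r₁ + r₄)

/-- `ρ = (r₁+r₂+r₃+r₄)/2`. -/
def rho (r₁ r₂ r₃ r₄ : ℤ) : ℤ := (r₁ + r₂ + r₃ + r₄) / 2

/-- `m_max = (1/2)·min(r₁+r₂−i, r₃+r₄−i, r₁+r₄−j, r₂+r₃−j)`. -/
def mMax (r₁ r₂ r₃ r₄ i j : ℤ) : ℤ :=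
  (min (min (r₁ + r₂ - i) (r₃ + r₄ - i)) (min (r₁ + r₄ - j) (r₂ + r₃ - j))) / 2

/-- `m_min = (1/2)·max(0, r₁+r₃−i−j, r₂+r₄−i−j)`. -/
def mMin (r₁ r₂ r₃ r₄ i j : ℤ) : ℤ :=
  (max 0 (max (r₁ + r₃ - i - j) (r₂ + r₄ - i - j))) / 2

/-- `θ_N(a,b,c)`. -/
noncomputable def theta (t : ℝ) (N a b c : ℤ) : ℝ :=
  Real.sqrt (qfact t ((a + b - c) / 2) * qfact t ((a - b + c) / 2) *
    qfact t ((-a + b + c) / 2) / qfact t ((a + b + c) / 2 + N - 1))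

/-- `K′ = θ_N(r₁,r₂,i)·θ_N(r₃,r₄,i)·θ_N(r₁,r₄,j)·θ_N(r₂,r₃,j)·[N−1]!·[N−2]!`. -/
noncomputable def Kprime (t : ℝ) (N r₁ r₂ r₃ r₄ i j : ℤ) : ℝ :=
  theta t N r₁ r₂ i * theta t N r₃ r₄ i * theta t N r₁ r₄ j * theta t N r₂ r₃ j *
    qfact t (N - 1) * qfact t (N - 2)

/-- The multiplicity-free 6-j expression `F_T^N(r₁,r₂,i; r₃,r₄,j)` of type `T ∈ {1,2}`. -/
noncomputable def F (t : ℝ) (T : ℕ) (N r₁ r₂ i r₃ r₄ j : ℤ) : ℝ :=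
  Kprime t N r₁ r₂ r₃ r₄ i j *
    ∑ m ∈ Finset.Icc (mMin r₁ r₂ r₃ r₄ i j) (mMax r₁ r₂ r₃ r₄ i j),
      (-1 : ℝ) ^ (rho r₁ r₂ r₃ r₄ - m) * qfact t (rho r₁ r₂ r₃ r₄ + N - 1 - m) /
        (qfact t m * qfact t ((r₃ + r₄ - i) / 2 - m) * qfact t ((r₂ + r₃ - j) / 2 - m) *
          qfact t ((r₁ + r₄ - j) / 2 - m) * qfact t ((i + j - r₂ - r₄) / 2 + m) *
          qfact t ((r₁ + r₂ - i) / 2 + (N - 2) * (if T = 2 then 1 else 0) - m) *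
          qfact t ((i + j - r₁ - r₃) / 2 + (N - 2) * (if T = 1 then 1 else 0) + m))

/-- The prefactor `K_T` (for the case `m_min = 0`). -/
noncomputable def Kfac (t : ℝ) (T : ℕ) (N r₁ r₂ i r₃ r₄ j : ℤ) : ℝ :=
  Kprime t N r₁ r₂ r₃ r₄ i j * qfact t (rho r₁ r₂ r₃ r₄ + N - 1) /
    (qfact t ((r₃ + r₄ - i) / 2) *
      qfact t ((r₁ + r₂ - i) / 2 + (N - 2) * (if T = 2 then 1 else 0)) *
      qfact t ((r₂ + r₃ - j) / 2) * qfact t ((r₁ + r₄ - j) / 2) *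
      qfact t ((i + j - r₂ - r₄) / 2) *
      qfact t ((i + j - r₁ - r₃) / 2 + (N - 2) * (if T = 1 then 1 else 0)))

section

variable {t : ℝ}

lemma qint_pos (ht : 0 < t) (ht1 : t ≠ 1) {n : ℤ} (hn : 0 < n) : 0 < qint t n := by
  unfold qint
  rcases lt_or_gt_of_ne ht1 with h | h
  · apply div_pos_of_neg_of_neg
    · linarith [zpow_lt_zpow_right_of_lt_one₀ ht h (show -n < n by omega)]
    · linarith [(one_lt_inv₀ ht).2 h]
  · apply div_pos
    · linarith [zpow_lt_zpow_right₀ h (show -n < n by omega)]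
    · linarith [(inv_lt_one₀ ht).2 h]

lemma qfact_pos (ht : 0 < t) (ht1 : t ≠ 1) (n : ℤ) : 0 < qfact t n :=
  prod_pos fun _ _ => qint_pos ht ht1 (by omega)

lemma qfact_zero : qfact t 0 = 1 := by
  simp [qfact]

lemma qfact_one (ht : 0 < t) (ht1 : t ≠ 1) : qfact t 1 = 1 := by
  have hden : t - t⁻¹ ≠ 0 := by
    rw [sub_ne_zero]
    intro h
    have : t * t = 1 := by rw [← mul_inv_cancel₀ ht.ne']; exact congrArg (t * ·) h
    exact ht1 ((mul_self_eq_one_iff.1 this).resolve_right (by linarith))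
  simp [qfact, qint, hden]

lemma qfact_add_one {a : ℤ} (ha : 0 ≤ a) : qfact t (a + 1) = qfact t a * qint t (a + 1) := by
  rw [qfact, qfact, show (a + 1).toNat = a.toNat + 1 by omega, prod_range_succ,
    Int.toNat_of_nonneg ha]

lemma qfact_add {x n : ℤ} (hx : 0 ≤ x) (hn : 0 ≤ n) :
    qfact t (x + n) = qfact t x * ∏ m ∈ Icc 1 n, qint t (x + m) := by
  induction n, hn using Int.leInduction with
  | base => simp
  | succ n hn ih =>
    rw [← add_assoc, qfact_add_one (by omega), ih,
      ← insert_Icc_right_eq_Icc_add_one (by omega), prod_insert (by simp), add_assoc]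
    ring

lemma theta_comm (N a b c : ℤ) : theta t N a b c = theta t N b a c := by
  rw [theta, theta, show b + a - c = a + b - c by ring, show b - a + c = -a + b + c by ring,
    show -b + a + c = a - b + c by ring, show b + a + c = a + b + c by ring, mul_right_comm]

lemma theta_two_shift (ht : 0 < t) (ht1 : t ≠ 1) {N a b c : ℤ} (hN : 2 ≤ N) (habc : a - b ≤ c) :
    theta t 2 a (b + (N - 2)) (c + (N - 2)) =
      theta t N a b c * √(∏ m ∈ Icc 1 (N - 2), qint t ((-a + b + c) / 2 + m)) := by
  have hfact := qfact_pos ht ht1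
  rw [theta, theta,
    ← Real.sqrt_mul (div_pos (mul_pos (mul_pos (hfact _) (hfact _)) (hfact _)) (hfact _)).le,
    show (a + (b + (N - 2)) - (c + (N - 2))) / 2 = (a + b - c) / 2 by ring_nf,
    show (a - (b + (N - 2)) + (c + (N - 2))) / 2 = (a - b + c) / 2 by ring_nf,
    show (-a + (b + (N - 2)) + (c + (N - 2))) / 2 = (-a + b + c) / 2 + (N - 2) by omega,
    show (a + (b + (N - 2)) + (c + (N - 2))) / 2 + 2 - 1 = (a + b + c) / 2 + N - 1 by omega,
    qfact_add (by omega) (by omega)]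
  ring_nf

lemma prod_inv_sqrt_mul {ι : Type*} (s : Finset ι) {f g : ι → ℝ} (hg : ∀ i ∈ s, 0 ≤ g i) :
    ∏ i ∈ s, (√(f i * g i))⁻¹ = (∏ i ∈ s, (√(f i))⁻¹) * (√(∏ i ∈ s, g i))⁻¹ := by
  rw [Real.sqrt_prod _ hg, ← prod_inv_distrib, ← prod_mul_distrib]
  exact prod_congr rfl fun i hi => by rw [Real.sqrt_mul' _ (hg i hi), mul_inv]

lemma Kprime_eq_of_shift (ht : 0 < t) (ht1 : t ≠ 1) {r₁ r₂ r₃ r₄ i j N : ℤ} (hN : 2 ≤ N)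
    (h₁₂ : r₁ - r₂ ≤ i) (h₃₄ : r₃ - r₄ ≤ i) (h₁₄ : r₁ - r₄ ≤ j) (h₃₂ : r₃ - r₂ ≤ j) :
    Kprime t N r₁ r₂ r₃ r₄ i j =
      qfact t (N - 1) * qfact t (N - 2) *
        (∏ m ∈ Icc 1 (N - 2),
          (√(qint t ((i - r₁ + r₂) / 2 + m) * qint t ((j + r₂ - r₃) / 2 + m) *
            qint t ((j - r₁ + r₄) / 2 + m) * qint t ((i - r₃ + r₄) / 2 + m)))⁻¹) *
        Kprime t 2 r₁ (r₂ + N - 2) r₃ (r₄ + N - 2) (i + N - 2) (j + N - 2) := by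
  have hqint : ∀ x, 0 ≤ x → ∀ m ∈ Icc 1 (N - 2), 0 < qint t (x + m) := fun x hx m hm =>
    qint_pos ht ht1 (by rw [mem_Icc] at hm; omega)
  have hsqrt : ∀ x, 0 ≤ x → √(∏ m ∈ Icc 1 (N - 2), qint t (x + m)) ≠ 0 := fun x hx =>
    (Real.sqrt_pos.2 (prod_pos (hqint x hx))).ne'
  rw [prod_inv_sqrt_mul _ fun m hm => (hqint _ (by omega) m hm).le,
    prod_inv_sqrt_mul _ fun m hm => (hqint _ (by omega) m hm).le,
    prod_inv_sqrt_mul _ fun m hm => (hqint _ (by omega) m hm).le, prod_inv_distrib,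
    ← Real.sqrt_prod _ fun m hm => (hqint _ (by omega) m hm).le]
  simp only [Kprime, show r₂ + N - 2 = r₂ + (N - 2) by ring, show r₄ + N - 2 = r₄ + (N - 2) by ring,
    show i + N - 2 = i + (N - 2) by ring, show j + N - 2 = j + (N - 2) by ring]
  rw [theta_comm 2 (r₂ + (N - 2)), theta_two_shift ht ht1 hN h₁₂, theta_two_shift ht ht1 hN h₃₄,
    theta_two_shift ht ht1 hN h₁₄, theta_two_shift ht ht1 hN h₃₂, theta_comm N r₃ r₂,
    show (2 : ℤ) - 1 = 1 by norm_num, show (2 : ℤ) - 2 = 0 by norm_num, qfact_one ht ht1,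
    qfact_zero, show -r₁ + r₂ + i = i - r₁ + r₂ by ring, show -r₃ + r₄ + i = i - r₃ + r₄ by ring,
    show -r₁ + r₄ + j = j - r₁ + r₄ by ring, show -r₃ + r₂ + j = j + r₂ - r₃ by ring]
  field_simp [hsqrt _ (show 0 ≤ (i - r₁ + r₂) / 2 by omega),
    hsqrt _ (show 0 ≤ (i - r₃ + r₄) / 2 by omega), hsqrt _ (show 0 ≤ (j - r₁ + r₄) / 2 by omega),
    hsqrt _ (show 0 ≤ (j + r₂ - r₃) / 2 by omega)]

noncomputable def racahSum (t : ℝ) (T : ℕ) (N r₁ r₂ i r₃ r₄ j : ℤ) : ℝ :=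
  ∑ m ∈ Finset.Icc (mMin r₁ r₂ r₃ r₄ i j) (mMax r₁ r₂ r₃ r₄ i j),
    (-1 : ℝ) ^ (rho r₁ r₂ r₃ r₄ - m) * qfact t (rho r₁ r₂ r₃ r₄ + N - 1 - m) /
      (qfact t m * qfact t ((r₃ + r₄ - i) / 2 - m) * qfact t ((r₂ + r₃ - j) / 2 - m) *
        qfact t ((r₁ + r₄ - j) / 2 - m) * qfact t ((i + j - r₂ - r₄) / 2 + m) *
        qfact t ((r₁ + r₂ - i) / 2 + (N - 2) * (if T = 2 then 1 else 0) - m) *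
        qfact t ((i + j - r₁ - r₃) / 2 + (N - 2) * (if T = 1 then 1 else 0) + m))

lemma F_eq_Kprime_mul_racahSum (T : ℕ) (N r₁ r₂ i r₃ r₄ j : ℤ) :
    F t T N r₁ r₂ i r₃ r₄ j = Kprime t N r₁ r₂ r₃ r₄ i j * racahSum t T N r₁ r₂ i r₃ r₄ j :=
  rfl

lemma racahSum_one_eq_shift {r₁ r₂ r₃ r₄ i j N : ℤ} (hN : 2 ≤ N) (hfus : r₁ + r₃ = r₂ + r₄) :
    racahSum t 1 N r₁ r₂ i r₃ r₄ j =
      (-1) ^ N * racahSum t 1 2 r₁ (r₂ + N - 2) (i + N - 2) r₃ (r₄ + N - 2) (j + N - 2) := by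
  have hmin : mMin r₁ (r₂ + N - 2) r₃ (r₄ + N - 2) (i + N - 2) (j + N - 2) =
      mMin r₁ r₂ r₃ r₄ i j := by
    simp only [mMin]; omega
  have hmax : mMax r₁ (r₂ + N - 2) r₃ (r₄ + N - 2) (i + N - 2) (j + N - 2) =
      mMax r₁ r₂ r₃ r₄ i j := by
    simp only [mMax]; omega
  have hrho : rho r₁ (r₂ + N - 2) r₃ (r₄ + N - 2) = rho r₁ r₂ r₃ r₄ + (N - 2) := by
    simp only [rho]; omega
  rw [racahSum, racahSum, hmin, hmax, hrho, mul_sum]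
  refine sum_congr rfl fun m _ => ?_
  have hsign : (-1 : ℝ) ^ (rho r₁ r₂ r₃ r₄ - m) =
      (-1) ^ N * (-1) ^ (rho r₁ r₂ r₃ r₄ + (N - 2) - m) := by
    rw [← zpow_add₀ (by norm_num),
      show N + (rho r₁ r₂ r₃ r₄ + (N - 2) - m) = rho r₁ r₂ r₃ r₄ - m + 2 * (N - 1) by ring,
      zpow_add₀ (by norm_num), zpow_mul]
    norm_num
  rw [hsign,
    show (i + N - 2 + (j + N - 2) - r₁ - r₃) / 2 = (i + j - r₁ - r₃) / 2 + (N - 2) by omega]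
  simp only [show (1 : ℕ) ≠ 2 by decide, if_true, if_false]
  ring_nf

end

lemma Admissible.shift {r₁ r₂ r₃ r₄ i j N : ℤ} (h : Admissible r₁ r₂ r₃ r₄ i j N) :
    Admissible r₁ (r₂ + N - 2) r₃ (r₄ + N - 2) (i + N - 2) (j + N - 2) 2 := by
  simp only [Admissible, max_le_iff, le_min_iff, abs_le] at h ⊢
  omega

/-- any type I multiplicity-free `U_q(sl_N)` 6-j symbol reduces to a
`U_q(sl_2)` one: the shifted tuple is admissible and
`F_1^N(r₁,r₂,i;r₃,r₄,j) = (−1)^N [N−1]! [N−2]! Θ₁(N) F_1^2(r₁, r₂+N−2, i+N−2; r₃, r₄+N−2, j+N−2)`. -/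
theorem stmt7 (t : ℝ) (ht : 0 < t) (ht1 : t ≠ 1) (r₁ r₂ r₃ r₄ i j N : ℤ)
    (hadm : Admissible r₁ r₂ r₃ r₄ i j N) (hfus : r₁ + r₃ = r₂ + r₄) :
    Admissible r₁ (r₂ + N - 2) r₃ (r₄ + N - 2) (i + N - 2) (j + N - 2) 2 ∧
    F t 1 N r₁ r₂ i r₃ r₄ j =
      (-1 : ℝ) ^ N * qfact t (N - 1) * qfact t (N - 2) *
        (∏ m ∈ Finset.Icc (1 : ℤ) (N - 2),
          (Real.sqrt (qint t ((i - r₁ + r₂) / 2 + m) * qint t ((j + r₂ - r₃) / 2 + m) *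
            qint t ((j - r₁ + r₄) / 2 + m) * qint t ((i - r₃ + r₄) / 2 + m)))⁻¹) *
        F t 1 2 r₁ (r₂ + N - 2) (i + N - 2) r₃ (r₄ + N - 2) (j + N - 2) := by
  refine ⟨hadm.shift, ?_⟩
  obtain ⟨-, -, -, -, -, -, hN, -, -, -, -, hi, -, hj, -⟩ := hadm
  simp only [max_le_iff, abs_le] at hi hj
  rw [F_eq_Kprime_mul_racahSum, F_eq_Kprime_mul_racahSum, racahSum_one_eq_shift hN hfus,
    Kprime_eq_of_shift ht ht1 hN (by omega) (by omega) (by omega) (by omega)]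
  ring
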